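/- arXiv:2410.06402 — 2 statements merged into one kernel-verified Lean document; each statement's English description precedes it below -/
import Mathlib

section
/- Let Y be a compact complex manifold, and let F be a divisor in a one-parameter family on Y with irreducible decomposition F = Σ_{j=1}^m t_j F_j (t_j ≥ 1, m ≥ 2). If K_Y restricted to F_1 is numerically trivial (torsion), then the adjunction formula gives K_{F_1} = (K_Y + F)|_{F_1} − (Σ_{j≥2} (t_j/t_1) F_j)|_{F_1} up to torsion, so K_{F_1} is Q-linearly equivalent to the negative of an effective Q-divisor, i.e., −K_{F_1} is Q-effective and nonzero when some F_j (j ≥ 2) meets F_1. -/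
/-!
Divisor classes on the component `F₁` of a reducible fiber are modelled by a `ℚ`-vector
space (module) `M`, with a cone `Eff ⊆ M` of effective classes which is closed under
addition and non-negative scaling and is pointed.  For a fiber
`F = ∑ⱼ tⱼ Fⱼ` of a one-parameter family, the restriction `F|_{F₁}` is numerically
trivial, and adjunction gives `K_{F₁} = (K_Y)|_{F₁} + (F₁)|_{F₁}`.
-/

/-- Let `F = ∑_{j} t_j F_j` (with `m ≥ 2` components, `t_j ≥ 1`) be a
fiber on `Y` whose restriction to `F₁` is trivial, and suppose `K_Y|_{F₁}` is numerically
trivial (torsion).  Then `K_{F₁} = −(1/t₁) ∑_{j ≥ 2} t_j F_j|_{F₁}`, so `−K_{F₁}` is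
`ℚ`-effective, and it is nonzero as soon as some `F_j` (`j ≥ 2`) meets `F₁`. -/
theorem adjunction_reducible_fiber {M : Type*} [AddCommGroup M] [Module ℚ M]
    (Eff : Set M)
    (hEff_add : ∀ x ∈ Eff, ∀ y ∈ Eff, x + y ∈ Eff)
    (hEff_smul : ∀ q : ℚ, 0 ≤ q → ∀ x ∈ Eff, q • x ∈ Eff)
    (hEff_pointed : ∀ x ∈ Eff, ∀ y ∈ Eff, x + y = 0 → x = 0)
    (hEff_zero : (0 : M) ∈ Eff)
    (m : ℕ)   -- the fiber has `m + 2 ≥ 2` irreducible components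
    (t : Fin (m + 2) → ℕ) (ht : ∀ j, 1 ≤ t j)
    (FF : Fin (m + 2) → M)                                -- the restrictions (F_j)|_{F₁}
    (hFeff : ∀ j : Fin (m + 2), j ≠ 0 → FF j ∈ Eff)       -- F_j|_{F₁} is effective for j ≥ 2
    (KY : M) (hKY : KY = 0)                         -- K_Y|_{F₁} is numerically trivial
    (hfiber : ∑ j, (t j : ℚ) • FF j = 0)            -- F|_{F₁} ≡ 0
    (KF1 : M) (hadj : KF1 = KY + FF 0) :            -- adjunction on F₁
    KF1 = -((t 0 : ℚ)⁻¹ • ∑ j ∈ Finset.univ.erase 0, (t j : ℚ) • FF j) ∧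
      -KF1 ∈ Eff ∧
      ((∃ j : Fin (m + 2), j ≠ 0 ∧ FF j ≠ 0) → KF1 ≠ 0) := by

  have ht0 : (t 0 : ℚ) ≠ 0 := by
    exact_mod_cast Nat.one_le_iff_ne_zero.mp (ht 0)
  set S : M := ∑ j ∈ Finset.univ.erase 0, (t j : ℚ) • FF j with hS
  have hsplit : (t 0 : ℚ) • FF 0 + S = 0 := by
    have h := Finset.add_sum_erase (Finset.univ : Finset (Fin (m + 2)))
      (fun j => (t j : ℚ) • FF j) (Finset.mem_univ 0)
    rw [hS]
    rw [h]
    exact hfiber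
  have hFF0 : FF 0 = -((t 0 : ℚ)⁻¹ • S) := by
    have : (t 0 : ℚ) • FF 0 = -S := by linear_combination (norm := module) hsplit
    apply smul_right_injective M ht0
    show (t 0 : ℚ) • FF 0 = (t 0 : ℚ) • -((t 0 : ℚ)⁻¹ • S)
    rw [this, smul_neg, smul_inv_smul₀ ht0]
  have hKF1 : KF1 = -((t 0 : ℚ)⁻¹ • S) := by rw [hadj, hKY, zero_add, hFF0]
  have hSeff : S ∈ Eff := by
    rw [hS]
    refine Finset.sum_induction _ (· ∈ Eff) (fun a b ha hb => hEff_add a ha b hb) hEff_zero ?_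
    intro j hj
    exact hEff_smul _ (by positivity) _ (hFeff j (Finset.mem_erase.mp hj).1)
  refine ⟨hKF1, ?_, ?_⟩
  · rw [hKF1, neg_neg]
    exact hEff_smul _ (by positivity) _ hSeff
  · rintro ⟨j, hj, hFj⟩ hK0
    have hS0 : S = 0 := by
      have := hKF1.symm.trans hK0
      have h2 : (t 0 : ℚ)⁻¹ • S = 0 := by rwa [neg_eq_zero] at this
      have := congrArg (fun x => (t 0 : ℚ) • x) h2
      simpa [smul_smul, mul_inv_cancel₀ ht0] using this
    have hterm : (t j : ℚ) • FF j = 0 := by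
      apply hEff_pointed _ (hEff_smul _ (by positivity) _ (hFeff j hj))
        (∑ i ∈ (Finset.univ.erase 0).erase j, (t i : ℚ) • FF i)
      · refine Finset.sum_induction _ (· ∈ Eff) (fun a b ha hb => hEff_add a ha b hb) hEff_zero ?_
        intro i hi
        exact hEff_smul _ (by positivity) _
          (hFeff i (Finset.mem_erase.mp (Finset.mem_erase.mp hi).2).1)
      · have h := Finset.add_sum_erase (Finset.univ.erase (0 : Fin (m + 2)))
          (fun i => (t i : ℚ) • FF i) (Finset.mem_erase.mpr ⟨hj, Finset.mem_univ j⟩)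
        rw [h, ← hS, hS0]
    have htj : (t j : ℚ) ≠ 0 := by
      exact_mod_cast Nat.one_le_iff_ne_zero.mp (ht j)
    exact hFj (by simpa [htj] using hterm)
end

section
/- Let X be a complex manifold, W ⊂ X a closed analytic subset, and suppose every non-constant entire curve f : C → X has image contained in W. If π : X → X₀ is a proper modification that is an isomorphism over X₀ ∖ π(W) and X₀ ∖ π(W) contains no non-constant entire curves, then d_X ≥ π*(d_{X₀}); in particular, if d_{X₀} is a distance on X₀, then d_X is a distance on X ∖ W. -/
/-!
Kobayashi pseudodistance, defined via chains of holomorphic discs. A "complex space"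
is modelled abstractly as a topological space `X` together with a predicate
`Holo : (𝔻 → X) → Prop` singling out the holomorphic maps from the unit disc.
-/

open scoped ENNReal

/-- The Poincaré distance between two points of the unit disc (as an extended real). -/
noncomputable def poincareDist (a b : Complex.UnitDisc) : ℝ≥0∞ :=
  ENNReal.ofReal
    (Real.log ((1 + ‖(((a : ℂ) - (b : ℂ)) / (1 - (starRingEnd ℂ) (a : ℂ) * (b : ℂ)))‖) /
      (1 - ‖(((a : ℂ) - (b : ℂ)) / (1 - (starRingEnd ℂ) (a : ℂ) * (b : ℂ)))‖)))

/-- A Kobayashi chain of holomorphic discs joining `p` to `q` in `X`. -/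
structure KobayashiChain {X : Type*} (Holo : (Complex.UnitDisc → X) → Prop) (p q : X) where
  n : ℕ
  f : Fin (n + 1) → Complex.UnitDisc → X
  a : Fin (n + 1) → Complex.UnitDisc
  b : Fin (n + 1) → Complex.UnitDisc
  holo : ∀ i, Holo (f i)
  source : f 0 (a 0) = p
  target : f (Fin.last n) (b (Fin.last n)) = q
  link : ∀ i : Fin n, f i.castSucc (b i.castSucc) = f i.succ (a i.succ)

/-- The length of a Kobayashi chain: the sum of the Poincaré distances. -/
noncomputable def KobayashiChain.length {X : Type*} {Holo : (Complex.UnitDisc → X) → Prop}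
    {p q : X} (c : KobayashiChain Holo p q) : ℝ≥0∞ :=
  ∑ i, poincareDist (c.a i) (c.b i)

/-- The Kobayashi pseudodistance of `X`: the infimum of lengths of chains of
holomorphic discs joining `p` to `q`. -/
noncomputable def kobayashiDist {X : Type*} (Holo : (Complex.UnitDisc → X) → Prop) (p q : X) :
    ℝ≥0∞ :=
  ⨅ c : KobayashiChain Holo p q, c.length


section

variable {X Y : Type*} {HoloX : (Complex.UnitDisc → X) → Prop}
  {HoloY : (Complex.UnitDisc → Y) → Prop}

namespace KobayashiChain

def map (g : X → Y) (hg : ∀ φ, HoloX φ → HoloY (g ∘ φ)) {p q : X}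
    (c : KobayashiChain HoloX p q) : KobayashiChain HoloY (g p) (g q) where
  n := c.n
  f i := g ∘ c.f i
  a := c.a
  b := c.b
  holo i := hg _ (c.holo i)
  source := congrArg g c.source
  target := congrArg g c.target
  link i := congrArg g (c.link i)

@[simp]
theorem length_map (g : X → Y) (hg : ∀ φ, HoloX φ → HoloY (g ∘ φ)) {p q : X}
    (c : KobayashiChain HoloX p q) : (c.map g hg).length = c.length :=
  rfl

end KobayashiChain

theorem kobayashiDist_map_le (g : X → Y) (hg : ∀ φ, HoloX φ → HoloY (g ∘ φ)) (p q : X) :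
    kobayashiDist HoloY (g p) (g q) ≤ kobayashiDist HoloX p q :=
  le_iInf fun c => (c.length_map g hg).symm ▸ iInf_le _ (c.map g hg)

theorem kobayashiDist_pos_of_injOn {g : X → Y} (hg : ∀ φ, HoloX φ → HoloY (g ∘ φ))
    {s : Set X} (hinj : Set.InjOn g s)
    (hY : ∀ p q : Y, p ≠ q → 0 < kobayashiDist HoloY p q) {p q : X} (hp : p ∈ s) (hq : q ∈ s)
    (hpq : p ≠ q) : 0 < kobayashiDist HoloX p q :=
  (hY _ _ (hinj.ne hp hq hpq)).trans_le (kobayashiDist_map_le g hg p q)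

end

theorem kobayashi_distance_off_exceptional_general {X X₀ : Type*}
    (W : Set X)
    (HoloX : (Complex.UnitDisc → X) → Prop) (HoloX₀ : (Complex.UnitDisc → X₀) → Prop)
    (π : X → X₀)
    (hπholo : ∀ g : Complex.UnitDisc → X, HoloX g → HoloX₀ (π ∘ g))
    (hmod : Set.InjOn π Wᶜ) :
    (∀ p q : X, kobayashiDist HoloX₀ (π p) (π q) ≤ kobayashiDist HoloX p q) ∧
    ((∀ p q : X₀, p ≠ q → 0 < kobayashiDist HoloX₀ p q) →
      ∀ p ∈ Wᶜ, ∀ q ∈ Wᶜ, p ≠ q → 0 < kobayashiDist HoloX p q) :=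
  ⟨kobayashiDist_map_le π hπholo, fun hX₀ _ hp _ hq hpq =>
    kobayashiDist_pos_of_injOn hπholo hmod hX₀ hp hq hpq⟩

/-- Let `π : X → X₀` be a proper modification such that every
non-constant entire curve of `X` lies in the closed analytic subset `W`, `π` is an
isomorphism off `W`, and `X₀ ∖ π(W)` contains no non-constant entire curves. Then
`d_X ≥ π^*(d_{X₀})`; in particular, if `d_{X₀}` is a distance, then `d_X` is a distance
on `X ∖ W`. -/
theorem kobayashi_distance_off_exceptional {X X₀ : Type*}
    [TopologicalSpace X] [TopologicalSpace X₀]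
    (W : Set X) (hWclosed : IsClosed W)
    (HoloX : (Complex.UnitDisc → X) → Prop) (HoloX₀ : (Complex.UnitDisc → X₀) → Prop)
    (EntireX : (ℂ → X) → Prop) (EntireX₀ : (ℂ → X₀) → Prop)
    (π : X → X₀) (hπcont : Continuous π)
    (hπholo : ∀ g : Complex.UnitDisc → X, HoloX g → HoloX₀ (π ∘ g))
    (hcurves : ∀ f : ℂ → X, EntireX f → ¬ (∃ c, f = fun _ => c) → Set.range f ⊆ W)
    (hmod : Set.InjOn π Wᶜ)
    (h₀curves : ∀ f : ℂ → X₀, EntireX₀ f → ¬ (∃ c, f = fun _ => c) →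
      ¬ Set.range f ⊆ (π '' W)ᶜ) :
    (∀ p q : X, kobayashiDist HoloX₀ (π p) (π q) ≤ kobayashiDist HoloX p q) ∧
    ((∀ p q : X₀, p ≠ q → 0 < kobayashiDist HoloX₀ p q) →
      ∀ p ∈ Wᶜ, ∀ q ∈ Wᶜ, p ≠ q → 0 < kobayashiDist HoloX p q) :=
  kobayashi_distance_off_exceptional_general W HoloX HoloX₀ π hπholo hmod
end
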